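/- Global optimum of the PIGAN objective: for probability mass functions p_{x_1},...,p_{x_N} (data distributions) and p_{g_1},...,p_{g_N} (generator distributions), weights π_i > 0 summing to 1, and λ ≥ 0, the quantity V = Σ_i π_i ( −log 4 + 2 JSD(p_{x_i}, p_{g_i}) ) + λ · JSD_π(p_{g_1},...,p_{g_N}) satisfies V ≥ −log 4, with equality (when λ > 0 and N ≥ 2) if and only if p_{x_1} = ... = p_{x_N} = p_{g_1} = ... = p_{g_N}. -/
import Mathlib

lemma kl_pt {p q : ℝ} (hp : 0 ≤ p) (hq : 0 ≤ q) (habs : q = 0 → p = 0) :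
    p - q ≤ p * Real.log (p / q) := by
  rcases hp.eq_or_lt with h | h
  · simp [← h]; linarith
  · have hq' : 0 < q := by
      rcases hq.eq_or_lt with h' | h'
      · exact absurd (habs h'.symm) (ne_of_gt h)
      · exact h'
    have hlog : Real.log (q / p) ≤ q / p - 1 :=
      Real.log_le_sub_one_of_pos (div_pos hq' h)
    have hdiv : Real.log (q / p) = Real.log q - Real.log p :=
      Real.log_div (ne_of_gt hq') (ne_of_gt h)
    have hdiv2 : Real.log (p / q) = Real.log p - Real.log q :=
      Real.log_div (ne_of_gt h) (ne_of_gt hq')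
    have := mul_le_mul_of_nonneg_left hlog h.le
    rw [hdiv] at this
    have hqp : p * (q / p - 1) = q - p := by field_simp
    rw [hdiv2]; nlinarith

lemma kl_pt_eq {p q : ℝ} (hp : 0 ≤ p) (hq : 0 ≤ q) (habs : q = 0 → p = 0)
    (h : p * Real.log (p / q) = p - q) : p = q := by
  rcases hp.eq_or_lt with h0 | h0
  · rw [← h0] at h ⊢; simp at h; linarith
  · have hq' : 0 < q := by
      rcases hq.eq_or_lt with h' | h'
      · exact absurd (habs h'.symm) (ne_of_gt h0)
      · exact h'
    by_contra hne
    have hne' : q / p ≠ 1 := by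
      intro hc; exact hne ((div_eq_one_iff_eq (ne_of_gt h0)).mp hc).symm
    have hlog : Real.log (q / p) < q / p - 1 :=
      Real.log_lt_sub_one_of_pos (div_pos hq' h0) hne'
    have hdiv : Real.log (q / p) = Real.log q - Real.log p :=
      Real.log_div (ne_of_gt hq') (ne_of_gt h0)
    have hdiv2 : Real.log (p / q) = Real.log p - Real.log q :=
      Real.log_div (ne_of_gt h0) (ne_of_gt hq')
    have := mul_lt_mul_of_pos_left hlog h0
    rw [hdiv] at this
    have hqp : p * (q / p - 1) = q - p := by field_simp
    rw [hdiv2] at h; nlinarith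

lemma kl_sum_eq {Ω : Type*} [Fintype Ω] (p q : Ω → ℝ)
    (hps : ∑ x, p x = 1) (hqs : ∑ x, q x = 1) :
    ∑ x, (p x * Real.log (p x / q x) - (p x - q x)) =
      ∑ x, p x * Real.log (p x / q x) := by
  rw [Finset.sum_sub_distrib, Finset.sum_sub_distrib, hps, hqs]; ring

lemma kl_nonneg {Ω : Type*} [Fintype Ω] (p q : Ω → ℝ)
    (hp0 : ∀ x, 0 ≤ p x) (hq0 : ∀ x, 0 ≤ q x)
    (hps : ∑ x, p x = 1) (hqs : ∑ x, q x = 1)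
    (habs : ∀ x, q x = 0 → p x = 0) :
    0 ≤ ∑ x, p x * Real.log (p x / q x) := by
  rw [← kl_sum_eq p q hps hqs]
  exact Finset.sum_nonneg fun x _ => sub_nonneg.mpr (kl_pt (hp0 x) (hq0 x) (habs x))

lemma kl_eq_zero_iff {Ω : Type*} [Fintype Ω] (p q : Ω → ℝ)
    (hp0 : ∀ x, 0 ≤ p x) (hq0 : ∀ x, 0 ≤ q x)
    (hps : ∑ x, p x = 1) (hqs : ∑ x, q x = 1)
    (habs : ∀ x, q x = 0 → p x = 0) :
    (∑ x, p x * Real.log (p x / q x)) = 0 ↔ p = q := by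
  constructor
  · intro h
    rw [← kl_sum_eq p q hps hqs] at h
    have h0 := (Finset.sum_eq_zero_iff_of_nonneg
      (fun x _ => sub_nonneg.mpr (kl_pt (hp0 x) (hq0 x) (habs x)))).mp h
    funext x
    have := h0 x (Finset.mem_univ x)
    exact kl_pt_eq (hp0 x) (hq0 x) (habs x) (by linarith [sub_eq_zero.mp this])
  · intro h
    subst h
    apply Finset.sum_eq_zero
    intro x _
    rcases (hp0 x).eq_or_lt with h | h
    · rw [← h]; ring
    · rw [div_self (ne_of_gt h), Real.log_one, mul_zero]

/-- Global optimum of the PIGAN objective: `V ≥ −log 4`, with equality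
(when `λ > 0`, `N ≥ 2`) iff all data and generator distributions coincide. -/
theorem pigan_global_optimum
    {Ω : Type*} [Fintype Ω] [Nonempty Ω] {N : ℕ} (hN : 1 ≤ N)
    (π : Fin N → ℝ) (hπpos : ∀ i, 0 < π i) (hπsum : ∑ i, π i = 1)
    (px pg : Fin N → Ω → ℝ)
    (hpx0 : ∀ i x, 0 ≤ px i x) (hpx1 : ∀ i, ∑ x, px i x = 1)
    (hpg0 : ∀ i x, 0 ≤ pg i x) (hpg1 : ∀ i, ∑ x, pg i x = 1)
    (lam : ℝ) (hlam : 0 ≤ lam) :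
    (∑ i, π i * (-(Real.log 4) +
        2 * ((1 / 2) * (∑ x, px i x *
                Real.log (px i x / ((px i x + pg i x) / 2))) +
             (1 / 2) * (∑ x, pg i x *
                Real.log (pg i x / ((px i x + pg i x) / 2))))) +
      lam * (∑ i, π i * (∑ x, pg i x *
          Real.log (pg i x / (∑ j, π j * pg j x)))) ≥ -(Real.log 4)) ∧
    (0 < lam → 2 ≤ N →
      ((∑ i, π i * (-(Real.log 4) +
          2 * ((1 / 2) * (∑ x, px i x *
                  Real.log (px i x / ((px i x + pg i x) / 2))) +
               (1 / 2) * (∑ x, pg i x *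
                  Real.log (pg i x / ((px i x + pg i x) / 2))))) +
        lam * (∑ i, π i * (∑ x, pg i x *
            Real.log (pg i x / (∑ j, π j * pg j x)))) = -(Real.log 4)) ↔
        ∀ i j, px i = pg j)) := by
  -- abbreviations
  set A : Fin N → ℝ := fun i => ∑ x, px i x *
      Real.log (px i x / ((px i x + pg i x) / 2)) with hAdef
  set B : Fin N → ℝ := fun i => ∑ x, pg i x *
      Real.log (pg i x / ((px i x + pg i x) / 2)) with hBdef
  set C : Fin N → ℝ := fun i => ∑ x, pg i x *
      Real.log (pg i x / (∑ j, π j * pg j x)) with hCdef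
  -- mixture facts
  have hm0 : ∀ i x, 0 ≤ (px i x + pg i x) / 2 := fun i x => by
    have := hpx0 i x; have := hpg0 i x; linarith
  have hm1 : ∀ i, ∑ x, (px i x + pg i x) / 2 = 1 := fun i => by
    rw [← Finset.sum_div, Finset.sum_add_distrib, hpx1 i, hpg1 i]; norm_num
  have hmabsx : ∀ i x, (px i x + pg i x) / 2 = 0 → px i x = 0 := fun i x h => by
    have := hpx0 i x; have := hpg0 i x; linarith
  have hmabsg : ∀ i x, (px i x + pg i x) / 2 = 0 → pg i x = 0 := fun i x h => by
    have := hpx0 i x; have := hpg0 i x; linarith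
  have hmix0 : ∀ x, 0 ≤ ∑ j, π j * pg j x := fun x =>
    Finset.sum_nonneg fun j _ => mul_nonneg (hπpos j).le (hpg0 j x)
  have hmix1 : ∑ x, (∑ j, π j * pg j x) = 1 := by
    rw [Finset.sum_comm]
    calc ∑ j, ∑ x, π j * pg j x = ∑ j, π j * ∑ x, pg j x := by
          refine Finset.sum_congr rfl fun j _ => ?_
          rw [Finset.mul_sum]
      _ = 1 := by simp only [hpg1, mul_one, hπsum]
  have hmixabs : ∀ i x, (∑ j, π j * pg j x) = 0 → pg i x = 0 := by
    intro i x h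
    have h2 := (Finset.sum_eq_zero_iff_of_nonneg
      (fun j (_ : j ∈ Finset.univ) => mul_nonneg (hπpos j).le (hpg0 j x))).mp h
      i (Finset.mem_univ i)
    rcases mul_eq_zero.mp h2 with h3 | h3
    · exact absurd h3 (ne_of_gt (hπpos i))
    · exact h3
  -- nonnegativity of KL terms
  have hA : ∀ i, 0 ≤ A i := fun i =>
    kl_nonneg (px i) (fun x => (px i x + pg i x) / 2) (hpx0 i) (hm0 i)
      (hpx1 i) (hm1 i) (hmabsx i)
  have hB : ∀ i, 0 ≤ B i := fun i =>
    kl_nonneg (pg i) (fun x => (px i x + pg i x) / 2) (hpg0 i) (hm0 i)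
      (hpg1 i) (hm1 i) (hmabsg i)
  have hC : ∀ i, 0 ≤ C i := fun i =>
    kl_nonneg (pg i) (fun x => ∑ j, π j * pg j x) (hpg0 i) hmix0
      (hpg1 i) hmix1 (hmixabs i)
  -- algebraic identity
  have hV : ∑ i, π i * (-(Real.log 4) + 2 * ((1/2) * A i + (1/2) * B i)) +
      lam * (∑ i, π i * C i)
      = -(Real.log 4) + (∑ i, π i * (A i + B i) + lam * ∑ i, π i * C i) := by
    have : ∀ i ∈ Finset.univ,
        π i * (-(Real.log 4) + 2 * ((1/2) * A i + (1/2) * B i))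
        = π i * (-(Real.log 4)) + π i * (A i + B i) := fun i _ => by ring
    rw [Finset.sum_congr rfl this, Finset.sum_add_distrib, ← Finset.sum_mul, hπsum]
    ring
  have hS1 : 0 ≤ ∑ i, π i * (A i + B i) :=
    Finset.sum_nonneg fun i _ => mul_nonneg (hπpos i).le (by linarith [hA i, hB i])
  have hS2 : 0 ≤ ∑ i, π i * C i :=
    Finset.sum_nonneg fun i _ => mul_nonneg (hπpos i).le (hC i)
  constructor
  · rw [hV]
    nlinarith [mul_nonneg hlam hS2]
  · intro hlam' _
    constructor
    · intro h
      rw [hV] at h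
      have hz1 : ∑ i, π i * (A i + B i) = 0 := by nlinarith [mul_nonneg hlam hS2]
      have hz2 : ∑ i, π i * C i = 0 := by
        nlinarith [mul_nonneg hlam hS2]
      have hAB : ∀ i, A i = 0 ∧ B i = 0 := by
        intro i
        have := (Finset.sum_eq_zero_iff_of_nonneg
          fun i (_ : i ∈ Finset.univ) =>
            mul_nonneg (hπpos i).le (by linarith [hA i, hB i] : 0 ≤ A i + B i)).mp
          hz1 i (Finset.mem_univ i)
        have hAB0 : A i + B i = 0 := by
          rcases mul_eq_zero.mp this with h3 | h3
          · exact absurd h3 (ne_of_gt (hπpos i))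
          · exact h3
        constructor <;> [skip; skip] <;> linarith [hA i, hB i]
      have hC0 : ∀ i, C i = 0 := by
        intro i
        have := (Finset.sum_eq_zero_iff_of_nonneg
          fun i (_ : i ∈ Finset.univ) => mul_nonneg (hπpos i).le (hC i)).mp
          hz2 i (Finset.mem_univ i)
        rcases mul_eq_zero.mp this with h3 | h3
        · exact absurd h3 (ne_of_gt (hπpos i))
        · exact h3
      -- extract distribution equalities
      have hxg : ∀ i, px i = pg i := by
        intro i
        have h1 := (kl_eq_zero_iff (px i) (fun x => (px i x + pg i x) / 2)
          (hpx0 i) (hm0 i) (hpx1 i) (hm1 i) (hmabsx i)).mp (hAB i).1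
        funext x
        have := congrFun h1 x
        linarith
      have hgmix : ∀ i, pg i = fun x => ∑ j, π j * pg j x := fun i =>
        (kl_eq_zero_iff (pg i) (fun x => ∑ j, π j * pg j x)
          (hpg0 i) hmix0 (hpg1 i) hmix1 (hmixabs i)).mp (hC0 i)
      intro i j
      rw [hxg i, hgmix i, ← hgmix j]
    · intro hall
      have hxg : ∀ i, px i = pg i := fun i => hall i i
      have hgg : ∀ i j, pg i = pg j := fun i j => (hall i i).symm.trans (hall i j)
      have hA0 : ∀ i, A i = 0 := by
        intro i
        have hmid : ∀ x, (px i x + pg i x) / 2 = px i x := by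
          intro x; rw [hxg i]; ring
        rw [hAdef]
        simp only [hmid]
        exact (kl_eq_zero_iff (px i) (px i) (hpx0 i) (hpx0 i) (hpx1 i) (hpx1 i)
          (fun x h => h)).mpr rfl
      have hB0 : ∀ i, B i = 0 := by
        intro i
        have hmid : ∀ x, (px i x + pg i x) / 2 = pg i x := by
          intro x; rw [hxg i]; ring
        rw [hBdef]
        simp only [hmid]
        exact (kl_eq_zero_iff (pg i) (pg i) (hpg0 i) (hpg0 i) (hpg1 i) (hpg1 i)
          (fun x h => h)).mpr rfl
      have hC0 : ∀ i, C i = 0 := by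
        intro i
        have hmid : ∀ x, (∑ j, π j * pg j x) = pg i x := by
          intro x
          calc ∑ j, π j * pg j x = ∑ j, π j * pg i x := by
                refine Finset.sum_congr rfl fun j _ => ?_
                rw [hgg j i]
            _ = pg i x := by rw [← Finset.sum_mul, hπsum, one_mul]
        rw [hCdef]
        simp only [hmid]
        exact (kl_eq_zero_iff (pg i) (pg i) (hpg0 i) (hpg0 i) (hpg1 i) (hpg1 i)
          (fun x h => h)).mpr rfl
      rw [hV]
      have e1 : ∑ i, π i * (A i + B i) = 0 :=
        Finset.sum_eq_zero fun i _ => by rw [hA0 i, hB0 i]; ring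
      have e2 : ∑ i, π i * C i = 0 :=
        Finset.sum_eq_zero fun i _ => by rw [hC0 i]; ring
      rw [e1, e2]; ring
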